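/- arXiv:2007.02440 — 4 statements merged into one kernel-verified Lean document; each statement's English description precedes it below -/
import Mathlib

section
/- If f ∈ W^{2,1}([a,b]) (twice weakly differentiable with f, f′, f″ integrable), then f is a difference of two convex functions on [a,b], and there is a constant C depending only on b−a such that ‖f‖_{DC([a,b])} ≤ C‖f‖_{W^{2,1}([a,b])}. -/
/-!
Split `f'' = p - q` into its positive and negative parts. By Taylor's formula with integral
remainder, `f = (f a + f' a (x - a) + ∬ p) - ∬ q` on `[a, b]`, and the double primitive of a
nonnegative integrable function is convex, its derivative being a monotone primitive. The second
piece is bounded by `(b - a) ‖f''‖₁`; the first is `f` plus the second, and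
`|f x| ≤ ‖f‖₁ / (b - a) + ‖f'‖₁` follows by averaging `|f x| ≤ |f y| + ‖f'‖₁` over `y ∈ [a, b]`.
-/

open Set Metric
open scoped ENNReal

/-- The DC norm of a function on a set `U`: the infimum of `‖f₁‖_{∞,U} + ‖f₂‖_{∞,U}` over all
decompositions `f = f₁ − f₂` of `f` as a difference of convex functions on `U` (with value `∞`
if no bounded decomposition exists). -/
noncomputable def dcNorm {E : Type*} [NormedAddCommGroup E] [NormedSpace ℝ E]
    (U : Set E) (f : E → ℝ) : ℝ≥0∞ :=
  sInf {r : ℝ≥0∞ | ∃ (f₁ f₂ : E → ℝ) (M₁ M₂ : ℝ),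
    ConvexOn ℝ U f₁ ∧ ConvexOn ℝ U f₂ ∧ (∀ x ∈ U, f x = f₁ x - f₂ x) ∧
    (∀ x ∈ U, |f₁ x| ≤ M₁) ∧ (∀ x ∈ U, |f₂ x| ≤ M₂) ∧ r = ENNReal.ofReal (M₁ + M₂)}

open MeasureTheory intervalIntegral

section IteratedPrimitive

variable {g g₁ g₂ : ℝ → ℝ}

lemma monotone_primitive_of_nonneg (hg : Integrable g) (hg₀ : 0 ≤ g) (a : ℝ) :
    Monotone fun x => ∫ t in a..x, g t := by
  intro x y hxy
  dsimp only
  rw [← integral_add_adjacent_intervals hg.intervalIntegrable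
    (hg.intervalIntegrable : IntervalIntegrable g volume x y)]
  exact le_add_of_nonneg_right (integral_nonneg hxy fun t _ => hg₀ t)

lemma convexOn_univ_primitive_of_monotone (hg : Continuous g) (hg_mono : Monotone g) (a : ℝ) :
    ConvexOn ℝ univ fun x => ∫ t in a..x, g t := by
  have hderiv : ∀ x, HasDerivAt (fun x => ∫ t in a..x, g t) (g x) x := fun x =>
    (hg.integral_hasStrictDerivAt a x).hasDerivAt
  refine Monotone.convexOn_univ_of_deriv (fun x => (hderiv x).differentiableAt) ?_
  rwa [funext fun x => (hderiv x).deriv]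

lemma convexOn_univ_integral_integral_of_nonneg (hg : Integrable g) (hg₀ : 0 ≤ g) (a : ℝ) :
    ConvexOn ℝ univ fun x => ∫ s in a..x, ∫ t in a..s, g t :=
  convexOn_univ_primitive_of_monotone (hg.continuous_primitive a)
    (monotone_primitive_of_nonneg hg hg₀ a) a

lemma integral_integral_sub (hg₁ : Integrable g₁) (hg₂ : Integrable g₂) (a x : ℝ) :
    ∫ s in a..x, ∫ t in a..s, (g₁ t - g₂ t)
      = (∫ s in a..x, ∫ t in a..s, g₁ t) - ∫ s in a..x, ∫ t in a..s, g₂ t := by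
  simp_rw [integral_sub hg₁.intervalIntegrable hg₂.intervalIntegrable]
  exact integral_sub ((hg₁.continuous_primitive a).intervalIntegrable _ _)
    ((hg₂.continuous_primitive a).intervalIntegrable _ _)

lemma abs_integral_integral_le (hg : Integrable g) (a x : ℝ) :
    |∫ s in a..x, ∫ t in a..s, g t| ≤ |x - a| * ∫ t, |g t| := by
  have hinner : ∀ s, ‖∫ t in a..s, g t‖ ≤ ∫ t, |g t| := fun s =>
    norm_integral_le_integral_norm_uIoc.trans
      (setIntegral_le_integral hg.norm (ae_of_all _ fun _ => norm_nonneg _))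
  simpa only [Real.norm_eq_abs, mul_comm] using
    norm_integral_le_of_norm_le_const fun s _ => hinner s

lemma integral_integral_congr {a b x : ℝ} (hg : EqOn g₁ g₂ (Icc a b)) (hx : x ∈ Icc a b) :
    ∫ s in a..x, ∫ t in a..s, g₁ t = ∫ s in a..x, ∫ t in a..s, g₂ t := by
  have ha : a ∈ Icc a b := left_mem_Icc.2 (hx.1.trans hx.2)
  exact integral_congr fun s hs => integral_congr fun t ht =>
    hg (uIcc_subset_Icc ha (uIcc_subset_Icc ha hx hs) ht)

end IteratedPrimitive

lemma convexOn_affine (c m a : ℝ) {s : Set ℝ} (hs : Convex ℝ s) :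
    ConvexOn ℝ s fun x => c + m * (x - a) :=
  ⟨hs, fun x _ y _ α β _ _ hαβ => le_of_eq <| by
    simp only [smul_eq_mul]; linear_combination (m * a - c) * hαβ⟩

section AbsolutelyContinuous

variable {f f' : ℝ → ℝ} {a b : ℝ}

lemma continuousOn_Icc_of_eq_add_integral (hf : ∀ x ∈ Icc a b, f x = f a + ∫ t in a..x, f' t)
    (hf' : IntegrableOn f' (Icc a b)) : ContinuousOn f (Icc a b) :=
  ((continuousOn_const (c := f a)).add (continuousOn_primitive hf')).congr fun x hx => by
    rw [hf x hx, integral_of_le hx.1]; rfl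

lemma abs_sub_le_integral_abs_of_eq_add_integral
    (hf : ∀ x ∈ Icc a b, f x = f a + ∫ t in a..x, f' t) (hf' : IntegrableOn f' (Icc a b))
    {x y : ℝ} (hx : x ∈ Icc a b) (hy : y ∈ Icc a b) :
    |f x - f y| ≤ ∫ t in Icc a b, |f' t| := by
  have ha : a ∈ Icc a b := left_mem_Icc.2 (hx.1.trans hx.2)
  have hint : ∀ z ∈ Icc a b, IntervalIntegrable f' volume a z := fun z hz =>
    (hf'.mono_set (uIcc_subset_Icc ha hz)).intervalIntegrable
  rw [hf x hx, hf y hy, add_sub_add_left_eq_sub, integral_interval_sub_left (hint x hx) (hint y hy),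
    ← Real.norm_eq_abs]
  refine norm_integral_le_integral_norm_uIoc.trans (setIntegral_mono_set hf'.norm
    (ae_of_all _ fun _ => norm_nonneg _) ?_)
  exact (uIoc_subset_uIcc.trans (uIcc_subset_Icc hy hx)).eventuallyLE

lemma abs_le_of_eq_add_integral (hab : a < b)
    (hf : ∀ x ∈ Icc a b, f x = f a + ∫ t in a..x, f' t) (hf' : IntegrableOn f' (Icc a b))
    {x : ℝ} (hx : x ∈ Icc a b) :
    |f x| ≤ (∫ t in Icc a b, |f t|) / (b - a) + ∫ t in Icc a b, |f' t| := by
  set I₁ := ∫ t in Icc a b, |f' t|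
  have hℓ : 0 < b - a := sub_pos.2 hab
  have hfin : volume (Icc a b) ≠ ⊤ := by simp [Real.volume_Icc]
  have hvol : volume.real (Icc a b) = b - a := by simp [measureReal_def, hab.le]
  have hf_int : IntegrableOn (fun t => |f t|) (Icc a b) :=
    (continuousOn_Icc_of_eq_add_integral hf hf').integrableOn_Icc.abs
  have hmean : (b - a) * |f x| ≤ (∫ t in Icc a b, |f t|) + (b - a) * I₁ := by
    calc (b - a) * |f x| = ∫ _ in Icc a b, |f x| := by rw [setIntegral_const, hvol, smul_eq_mul]
      _ ≤ ∫ y in Icc a b, (|f y| + I₁) := by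
        refine setIntegral_mono_on (integrableOn_const hfin) (hf_int.add (integrableOn_const hfin))
          measurableSet_Icc fun y hy => ?_
        linarith [abs_sub_abs_le_abs_sub (f x) (f y),
          abs_sub_le_integral_abs_of_eq_add_integral hf hf' hx hy]
      _ = (∫ t in Icc a b, |f t|) + (b - a) * I₁ := by
        rw [integral_add hf_int (integrableOn_const hfin), setIntegral_const, hvol, smul_eq_mul]
  rw [div_add' _ _ _ hℓ.ne', le_div_iff₀ hℓ]
  linarith

end AbsolutelyContinuous

theorem eq_add_mul_add_integral_integral {f f' f'' : ℝ → ℝ} {a b x : ℝ}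
    (hf : ∀ x ∈ Icc a b, f x = f a + ∫ t in a..x, f' t)
    (hf' : ∀ x ∈ Icc a b, f' x = f' a + ∫ t in a..x, f'' t)
    (hf'' : IntegrableOn f'' (Icc a b)) (hx : x ∈ Icc a b) :
    f x = f a + f' a * (x - a) + ∫ s in a..x, ∫ t in a..s, f'' t := by
  have hsub : uIcc a x ⊆ Icc a b := uIcc_subset_Icc (left_mem_Icc.2 (hx.1.trans hx.2)) hx
  have hcont : ContinuousOn (fun s => ∫ t in a..s, f'' t) (uIcc a x) :=
    continuousOn_primitive_interval (hf''.mono_set hsub)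
  rw [hf x hx, integral_congr fun s hs => hf' s (hsub hs),
    integral_add intervalIntegrable_const hcont.intervalIntegrable,
    intervalIntegral.integral_const, smul_eq_mul]
  ring

lemma dcNorm_le_ofReal {E : Type*} [NormedAddCommGroup E] [NormedSpace ℝ E] {U : Set E}
    {f f₁ f₂ : E → ℝ} {M₁ M₂ : ℝ} (hf₁ : ConvexOn ℝ U f₁) (hf₂ : ConvexOn ℝ U f₂)
    (hf : ∀ x ∈ U, f x = f₁ x - f₂ x) (hM₁ : ∀ x ∈ U, |f₁ x| ≤ M₁) (hM₂ : ∀ x ∈ U, |f₂ x| ≤ M₂) :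
    dcNorm U f ≤ ENNReal.ofReal (M₁ + M₂) :=
  sInf_le ⟨f₁, f₂, M₁, M₂, hf₁, hf₂, hf, hM₁, hM₂, rfl⟩

theorem exists_convexOn_sub_with_abs_le {f f' f'' : ℝ → ℝ} {a b : ℝ} (hab : a < b)
    (hf : ∀ x ∈ Icc a b, f x = f a + ∫ t in a..x, f' t)
    (hf' : ∀ x ∈ Icc a b, f' x = f' a + ∫ t in a..x, f'' t)
    (hf'' : IntegrableOn f'' (Icc a b)) :
    ∃ f₁ f₂ : ℝ → ℝ, ConvexOn ℝ (Icc a b) f₁ ∧ ConvexOn ℝ (Icc a b) f₂ ∧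
      (∀ x ∈ Icc a b, f x = f₁ x - f₂ x) ∧
      (∀ x ∈ Icc a b, |f₁ x| ≤ (∫ t in Icc a b, |f t|) / (b - a) + (∫ t in Icc a b, |f' t|)
        + (b - a) * ∫ t in Icc a b, |f'' t|) ∧
      (∀ x ∈ Icc a b, |f₂ x| ≤ (b - a) * ∫ t in Icc a b, |f'' t|) := by
  set h := (Icc a b).indicator f''
  set p := fun t => max (h t) 0
  set q := fun t => max (-h t) 0
  have hh : Integrable h := hf''.integrable_indicator measurableSet_Icc
  have hp : Integrable p := hh.pos_part
  have hq : Integrable q := hh.neg.pos_part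
  set F₁ := fun x => f a + f' a * (x - a) + ∫ s in a..x, ∫ t in a..s, p t
  set F₂ := fun x => ∫ s in a..x, ∫ t in a..s, q t
  have hdecomp : ∀ x ∈ Icc a b, f x = F₁ x - F₂ x := by
    intro x hx
    have hh_eq : EqOn f'' h (Icc a b) := fun t ht => (indicator_of_mem ht f'').symm
    rw [eq_add_mul_add_integral_integral hf hf' hf'' hx, integral_integral_congr hh_eq hx,
      add_sub_assoc, ← integral_integral_sub hp hq]
    simp only [p, q, max_zero_sub_max_neg_zero_eq_self]
  have hF₂ : ∀ x ∈ Icc a b, |F₂ x| ≤ (b - a) * ∫ t in Icc a b, |f'' t| := by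
    intro x hx
    have hxa : |x - a| ≤ b - a := by rw [abs_of_nonneg (sub_nonneg.2 hx.1)]; linarith [hx.2]
    have hq_le : ∫ t, |q t| ≤ ∫ t in Icc a b, |f'' t| := by
      rw [← MeasureTheory.integral_indicator measurableSet_Icc]
      refine integral_mono hq.abs
        (IntegrableOn.integrable_indicator hf''.abs measurableSet_Icc) fun t => ?_
      calc |q t| ≤ |h t| :=
            (abs_of_nonneg (le_max_right _ _)).trans_le (max_le (neg_le_abs _) (abs_nonneg _))
        _ = (Icc a b).indicator (fun t => |f'' t|) t := norm_indicator_eq_indicator_norm f'' t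
    exact (abs_integral_integral_le hq a x).trans
      (mul_le_mul hxa hq_le (integral_nonneg fun _ => abs_nonneg _) (sub_nonneg.2 hab.le))
  refine ⟨F₁, F₂, ?_, ?_, hdecomp, fun x hx => ?_, hF₂⟩
  · exact (convexOn_affine _ _ _ (convex_Icc a b)).add
      ((convexOn_univ_integral_integral_of_nonneg hp (fun _ => le_max_right _ _) a).subset
        (subset_univ _) (convex_Icc a b))
  · exact (convexOn_univ_integral_integral_of_nonneg hq (fun _ => le_max_right _ _) a).subset
      (subset_univ _) (convex_Icc a b)
  · have hf'_int : IntegrableOn f' (Icc a b) :=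
      (continuousOn_Icc_of_eq_add_integral hf' hf'').integrableOn_Icc
    calc |F₁ x| = |f x + F₂ x| := by rw [hdecomp x hx, sub_add_cancel]
      _ ≤ |f x| + |F₂ x| := abs_add_le _ _
      _ ≤ _ := add_le_add (abs_le_of_eq_add_integral hab hf hf'_int hx) (hF₂ x hx)

/-- If `f ∈ W^{2,1}([a,b])`, then `f` is a difference of two convex functions on `[a,b]`, and
there is a constant `C` depending only on `b − a` with
`‖f‖_{DC([a,b])} ≤ C ‖f‖_{W^{2,1}([a,b])}`. -/
theorem stmt8 (ℓ : ℝ) (hℓ : 0 < ℓ) :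
    ∃ C : ℝ, 0 < C ∧ ∀ (a b : ℝ), b - a = ℓ → ∀ f f' f'' : ℝ → ℝ,
      (∀ x ∈ Icc a b, f x = f a + ∫ t in a..x, f' t) →
      (∀ x ∈ Icc a b, f' x = f' a + ∫ t in a..x, f'' t) →
      IntegrableOn f'' (Icc a b) →
      (∃ f₁ f₂ : ℝ → ℝ, ConvexOn ℝ (Icc a b) f₁ ∧ ConvexOn ℝ (Icc a b) f₂ ∧
        ∀ x ∈ Icc a b, f x = f₁ x - f₂ x) ∧
      dcNorm (Icc a b) f
        ≤ ENNReal.ofReal (C * ((∫ t in Icc a b, |f t|) + (∫ t in Icc a b, |f' t|)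
            + ∫ t in Icc a b, |f'' t|)) := by
  refine ⟨1 / ℓ + 1 + 2 * ℓ, by positivity, fun a b hab f f' f'' hf hf' hf'' => ?_⟩
  obtain ⟨f₁, f₂, hf₁, hf₂, hsub, hM₁, hM₂⟩ :=
    exists_convexOn_sub_with_abs_le (by linarith) hf hf' hf''
  refine ⟨⟨f₁, f₂, hf₁, hf₂, hsub⟩,
    (dcNorm_le_ofReal hf₁ hf₂ hsub hM₁ hM₂).trans (ENNReal.ofReal_le_ofReal ?_)⟩
  have hI₀ : 0 ≤ ∫ t in Icc a b, |f t| := integral_nonneg fun _ => abs_nonneg _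
  have hI₁ : 0 ≤ ∫ t in Icc a b, |f' t| := integral_nonneg fun _ => abs_nonneg _
  have hI₂ : 0 ≤ ∫ t in Icc a b, |f'' t| := integral_nonneg fun _ => abs_nonneg _
  rw [hab, div_eq_mul_one_div]
  have hℓ' : 0 < 1 / ℓ := by positivity
  nlinarith [mul_nonneg hℓ'.le hI₁, mul_nonneg hℓ'.le hI₂, mul_nonneg hℓ.le hI₀,
    mul_nonneg hℓ.le hI₁]
end

section
/- There exist universal constants 0 < c < C such that for all bounded continuous f : ℝ^d → ℝ and all t ≥ 1: c(‖f‖_∞ + t·sup_{|y|≤t^{−1/2}} ‖Δ²_y f‖_∞) ≤ K(t, f, C^{1,1}(ℝ^d), C_b(ℝ^d)) ≤ C(‖f‖_∞ + t·sup_{|y|≤t^{−1/2}} ‖Δ²_y f‖_∞). -/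
/-!
Lower bound: if `f = g + (f - g)` with `g ∈ C^{1,1}`, Taylor's formula gives
`|Δ²_y g| ≤ 2 Lip(Dg) |y|² ≤ 2 Lip(Dg) / t` for `|y| ≤ t^{-1/2}`, while
`|Δ²_y (f - g)| ≤ 4 ‖f - g‖_∞`; so `‖f‖_∞ + t sup_y ‖Δ²_y f‖_∞` is at most five times the cost
`‖g‖_{C^{1,1}} + t ‖f - g‖_∞` of any splitting.

Upper bound: rescale `f` by `h = t^{-1/2}` and convolve with an even normalized bump `ψ`
supported in the unit ball. As `ψ` and `D²ψ` are even and `∫ D²ψ = 0`, both `f ⋆ ψ - f` and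
`D²(f ⋆ ψ)` are averages of second differences `Δ²_y f` with `|y| ≤ 1` against these kernels,
hence bounded by `ω / 2` and `(ω / 2) ∫ ‖D²ψ‖`, where `ω` bounds the second differences.
Scaling back multiplies the Lipschitz constant of the derivative by `h⁻² = t`, and
`‖Dg‖_∞ ≤ 2 ‖g‖_∞ + Lip(Dg)` by Taylor's formula at unit distance.
-/

open Set

/-- The `K`-functional between `C^{1,1}(ℝ^d)` (norm `‖g‖_∞ + ‖Dg‖_∞ + Lip(Dg)`) and
`C_b(ℝ^d)` (sup norm): `K(t,f) = inf { ‖g‖_{C^{1,1}} + t ‖f − g‖_∞ }`. -/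
noncomputable def K14 {d : ℕ} (t : ℝ) (f : EuclideanSpace ℝ (Fin d) → ℝ) : ℝ :=
  sInf {r : ℝ | ∃ (g : EuclideanSpace ℝ (Fin d) → ℝ)
      (g' : EuclideanSpace ℝ (Fin d) → EuclideanSpace ℝ (Fin d) →L[ℝ] ℝ)
      (L M₀ M₁ M₂ : ℝ), 0 ≤ L ∧
    (∀ x, HasFDerivAt g (g' x) x) ∧ LipschitzWith L.toNNReal g' ∧
    (∀ x, |g x| ≤ M₀) ∧ (∀ x, ‖g' x‖ ≤ M₁) ∧ (∀ x, |f x - g x| ≤ M₂) ∧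
    r = M₀ + M₁ + L + t * M₂}

/-- The sup of the second-order differences `‖Δ²_y f‖_∞` over `|y| ≤ t^{-1/2}`. -/
noncomputable def sup2 {d : ℕ} (t : ℝ) (f : EuclideanSpace ℝ (Fin d) → ℝ) : ℝ :=
  ⨆ y : {y : EuclideanSpace ℝ (Fin d) // ‖y‖ ≤ t ^ (-(1 / 2) : ℝ)},
    ⨆ x : EuclideanSpace ℝ (Fin d), |f (x + y) + f (x - y) - 2 * f x|

open MeasureTheory Metric
open scoped NNReal

section LipschitzFDeriv

variable {E F : Type*} [NormedAddCommGroup E] [NormedSpace ℝ E] [NormedAddCommGroup F]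
  [NormedSpace ℝ F] {g : E → F} {g' : E → E →L[ℝ] F} {K : ℝ≥0}

theorem norm_sub_sub_fderiv_le_of_lipschitzWith (hg : ∀ x, HasFDerivAt g (g' x) x)
    (hK : LipschitzWith K g') (x y : E) : ‖g (x + y) - g x - g' x y‖ ≤ K * ‖y‖ ^ 2 := by
  have hy : x + y ∈ closedBall x ‖y‖ := by simp
  have := (convex_closedBall x ‖y‖).norm_image_sub_le_of_norm_hasFDerivWithin_le'
    (φ := g' x) (C := K * ‖y‖) (fun z _ => (hg z).hasFDerivWithinAt) (fun z hz => ?_)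
    (mem_closedBall_self (norm_nonneg y)) hy
  · simpa [sq, mul_assoc] using this
  · calc ‖g' z - g' x‖ ≤ K * ‖z - x‖ := by simpa [dist_eq_norm] using hK.dist_le_mul z x
      _ ≤ K * ‖y‖ := by gcongr; exact mem_closedBall_iff_norm.mp hz

theorem norm_fderiv_le_of_lipschitzWith {M : ℝ} (hg : ∀ x, HasFDerivAt g (g' x) x)
    (hK : LipschitzWith K g') (hM : ∀ x, ‖g x‖ ≤ M) (x : E) : ‖g' x‖ ≤ 2 * M + K := by
  have hM0 : 0 ≤ M := (norm_nonneg _).trans (hM x)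
  refine ContinuousLinearMap.opNorm_le_of_unit_norm (by positivity) fun e he => ?_
  have htaylor := norm_sub_sub_fderiv_le_of_lipschitzWith hg hK x e
  rw [he] at htaylor
  calc ‖g' x e‖ = ‖(g (x + e) - g x) - (g (x + e) - g x - g' x e)‖ := by congr 1; abel
    _ ≤ ‖g (x + e)‖ + ‖g x‖ + ‖g (x + e) - g x - g' x e‖ :=
        (norm_sub_le _ _).trans (by gcongr; exact norm_sub_le _ _)
    _ ≤ 2 * M + K := by linarith [hM (x + e), hM x]

theorem hasFDerivAt_comp_smul (hg : ∀ x, HasFDerivAt g (g' x) x) (c : ℝ) (x : E) :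
    HasFDerivAt (fun x => g (c • x)) (c • g' (c • x)) x := by
  refine ((hg (c • x)).comp x ((hasFDerivAt_id x).const_smul c)).congr_fderiv ?_
  ext v
  simp

theorem LipschitzWith.comp_smul (hK : LipschitzWith K g') (c : ℝ) :
    LipschitzWith (‖c‖₊ * (K * ‖c‖₊)) fun x => c • g' (c • x) :=
  (lipschitzWith_smul c).comp (hK.comp (lipschitzWith_smul c))

end LipschitzFDeriv

theorem abs_secondDiff_le_of_lipschitzWith {E : Type*} [NormedAddCommGroup E] [NormedSpace ℝ E]
    {g : E → ℝ} {g' : E → E →L[ℝ] ℝ} {K : ℝ≥0} (hg : ∀ x, HasFDerivAt g (g' x) x)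
    (hK : LipschitzWith K g') (x y : E) :
    |g (x + y) + g (x - y) - 2 * g x| ≤ 2 * K * ‖y‖ ^ 2 := by
  have hplus := norm_sub_sub_fderiv_le_of_lipschitzWith hg hK x y
  have hminus := norm_sub_sub_fderiv_le_of_lipschitzWith hg hK x (-y)
  rw [Real.norm_eq_abs] at hplus hminus
  rw [map_neg, norm_neg, ← sub_eq_add_neg] at hminus
  calc |g (x + y) + g (x - y) - 2 * g x|
      = |(g (x + y) - g x - g' x y) + (g (x - y) - g x - -g' x y)| := by congr 1; ring
    _ ≤ 2 * K * ‖y‖ ^ 2 := by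
      linarith [abs_add_le (g (x + y) - g x - g' x y) (g (x - y) - g x - -g' x y)]

theorem abs_secondDiff_le_of_abs_sub_le {E : Type*} [AddGroup E] {f g : E → ℝ} {M : ℝ}
    (h : ∀ x, |f x - g x| ≤ M) (x y : E) :
    |f (x + y) + f (x - y) - 2 * f x| ≤ |g (x + y) + g (x - y) - 2 * g x| + 4 * M := by
  have h₁ := abs_le.mp (h (x + y))
  have h₂ := abs_le.mp (h (x - y))
  have h₃ := abs_le.mp (h x)
  have hdiff : |(f (x + y) + f (x - y) - 2 * f x) - (g (x + y) + g (x - y) - 2 * g x)| ≤ 4 * M :=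
    abs_le.mpr ⟨by linarith, by linarith⟩
  linarith [abs_sub_abs_le_abs_sub (f (x + y) + f (x - y) - 2 * f x)
    (g (x + y) + g (x - y) - 2 * g x)]

section Parity

variable {E W : Type*} [NormedAddCommGroup E] [NormedSpace ℝ E] [NormedAddCommGroup W]
  [NormedSpace ℝ W] {w : E → W}

theorem fderiv_comp_neg (w : E → W) (x : E) :
    fderiv ℝ (fun y => w (-y)) x = -fderiv ℝ w (-x) := by
  have := (ContinuousLinearEquiv.neg ℝ : E ≃L[ℝ] E).comp_right_fderiv (f := w) (x := x)
  ext v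
  exact congr($this v).trans (by simp)

theorem fderiv_neg_of_even (hw : ∀ x, w (-x) = w x) (x : E) :
    fderiv ℝ w (-x) = -fderiv ℝ w x := by
  have := fderiv_comp_neg w x
  simp only [hw] at this
  rw [this, neg_neg]

theorem fderiv_neg_of_odd (hw : ∀ x, w (-x) = -w x) (x : E) :
    fderiv ℝ w (-x) = fderiv ℝ w x := by
  have := fderiv_comp_neg w x
  simp only [hw, fderiv_fun_neg, neg_inj] at this
  exact this.symm

end Parity

theorem abs_integral_comp_sub_smul_le {G : Type*} [AddGroup G] [MeasurableSpace G]
    {μ : Measure G} {u k : G → ℝ} {B : ℝ} (hB : ∀ x, |u x| ≤ B) (hk : ∀ y, 0 ≤ k y)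
    (hk_int : Integrable k μ) (x : G) :
    |∫ y, u (x - y) • k y ∂μ| ≤ B * ∫ y, k y ∂μ := by
  rw [← Real.norm_eq_abs, ← integral_const_mul]
  refine norm_integral_le_of_norm_le (hk_int.const_mul B) (.of_forall fun y => ?_)
  rw [norm_smul, Real.norm_eq_abs, Real.norm_of_nonneg (hk y)]
  exact mul_le_mul_of_nonneg_right (hB _) (hk y)

section Mollification

variable {E W : Type*} [NormedAddCommGroup E] [NormedSpace ℝ E] [FiniteDimensional ℝ E]
  [MeasurableSpace E] [BorelSpace E] {μ : Measure E} [μ.IsAddHaarMeasure]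
  [NormedAddCommGroup W] [NormedSpace ℝ W]

theorem hasFDerivAt_integral_comp_sub_smul {u : E → ℝ} {k : E → W} (hu : LocallyIntegrable u μ)
    (hk : ContDiff ℝ 1 k) (hks : HasCompactSupport k) (x : E) :
    HasFDerivAt (fun x => ∫ y, u (x - y) • k y ∂μ) (∫ y, u (x - y) • fderiv ℝ k y ∂μ) x := by
  have hL : (ContinuousLinearMap.lsmul ℝ ℝ : ℝ →L[ℝ] W →L[ℝ] W).precompR E =
      ContinuousLinearMap.lsmul ℝ ℝ := by
    ext
    simp
  have := hks.hasFDerivAt_convolution_right (ContinuousLinearMap.lsmul ℝ ℝ) hu hk x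
  rw [hL, convolution_lsmul_swap] at this
  convert this using 1
  ext x
  exact convolution_lsmul_swap.symm

theorem integral_fderiv_eq_zero {k : E → W} (hk : ContDiff ℝ 1 k) (hks : HasCompactSupport k) :
    ∫ y, fderiv ℝ k y ∂μ = 0 := by
  have h := hasFDerivAt_integral_comp_sub_smul (μ := μ) (locallyIntegrable_const (1 : ℝ)) hk hks 0
  simp only [one_smul] at h
  exact h.unique (hasFDerivAt_const _ _)

theorem norm_integral_comp_sub_smul_sub_le {u : E → ℝ} {k : E → W} {r ω : ℝ}
    (hu : Continuous u) (hk : Continuous k) (hks : tsupport k ⊆ closedBall 0 r)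
    (hk_even : ∀ y, k (-y) = k y)
    (hω : ∀ x y, ‖y‖ ≤ r → |u (x + y) + u (x - y) - 2 * u x| ≤ ω) (x : E) :
    ‖∫ y, u (x - y) • k y ∂μ - u x • ∫ y, k y ∂μ‖ ≤ ω / 2 * ∫ y, ‖k y‖ ∂μ := by
  have hkc : HasCompactSupport k :=
    (isCompact_closedBall 0 r).of_isClosed_subset (isClosed_tsupport k) hks
  have hint : ∀ c : E → ℝ, Continuous c → Integrable (fun y => c y • k y) μ := fun c hc =>
    (hc.smul hk).integrable_of_hasCompactSupport hkc.smul_left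
  have hu_add := hint (fun y => u (x + y)) (by fun_prop)
  have hu_sub := hint (fun y => u (x - y)) (by fun_prop)
  -- evenness of `k` symmetrizes the integral into one against second differences of `u`
  have hflip : ∫ y, u (x + y) • k y ∂μ = ∫ y, u (x - y) • k y ∂μ := by
    rw [← integral_neg_eq_self]
    simp only [hk_even, sub_eq_add_neg]
  have hsym : ∫ y, (u (x + y) + u (x - y) - 2 * u x) • k y ∂μ =
      (2 : ℝ) • (∫ y, u (x - y) • k y ∂μ - u x • ∫ y, k y ∂μ) := by
    simp only [sub_smul, add_smul]
    have hu_add_sub : Integrable (fun y => u (x + y) • k y + u (x - y) • k y) μ :=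
      hu_add.add hu_sub
    rw [integral_sub hu_add_sub (hint _ continuous_const), integral_add hu_add hu_sub,
      hflip, integral_smul]
    module
  have hbound : ‖∫ y, (u (x + y) + u (x - y) - 2 * u x) • k y ∂μ‖ ≤ ω * ∫ y, ‖k y‖ ∂μ := by
    rw [← integral_const_mul]
    refine norm_integral_le_of_norm_le
      ((hk.integrable_of_hasCompactSupport hkc).norm.const_mul ω) (.of_forall fun y => ?_)
    rw [norm_smul, Real.norm_eq_abs]
    by_cases hy : k y = 0
    · simp [hy]
    · gcongr
      exact hω x y (mem_closedBall_zero_iff.mp (hks (subset_tsupport k hy)))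
  rw [hsym, norm_smul, Real.norm_two] at hbound
  linarith

theorem exists_lipschitzWith_fderiv_approx_of_secondDiff_le_one (φ : ContDiffBump (0 : E))
    (hφ : φ.rOut ≤ 1) {u : E → ℝ} {B ω : ℝ} (hu : Continuous u) (hB : ∀ x, |u x| ≤ B)
    (hω : ∀ x y, ‖y‖ ≤ 1 → |u (x + y) + u (x - y) - 2 * u x| ≤ ω) :
    ∃ (F : E → ℝ) (F' : E → E →L[ℝ] ℝ), (∀ x, HasFDerivAt F (F' x) x) ∧
      LipschitzWith (ω / 2 * ∫ y, ‖fderiv ℝ (fderiv ℝ (φ.normed μ)) y‖ ∂μ).toNNReal F' ∧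
      (∀ x, |F x| ≤ B) ∧ ∀ x, |u x - F x| ≤ ω / 2 := by
  set ψ := φ.normed μ
  set k₁ := fderiv ℝ ψ
  set k₂ := fderiv ℝ k₁
  have hψ : ContDiff ℝ 2 ψ := φ.contDiff_normed
  have hk₁ : ContDiff ℝ 1 k₁ := hψ.fderiv_right (by norm_num)
  have hψ_supp : tsupport ψ ⊆ closedBall 0 1 := by
    rw [φ.tsupport_normed_eq]
    exact closedBall_subset_closedBall hφ
  have hk₁_supp : tsupport k₁ ⊆ closedBall 0 1 := (tsupport_fderiv_subset ℝ).trans hψ_supp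
  have hk₂_supp : tsupport k₂ ⊆ closedBall 0 1 := (tsupport_fderiv_subset ℝ).trans hk₁_supp
  have hψ_even : ∀ y, ψ (-y) = ψ y := φ.normed_neg
  have hk₁_odd : ∀ y, k₁ (-y) = -k₁ y := fderiv_neg_of_even hψ_even
  have hk₂_even : ∀ y, k₂ (-y) = k₂ y := fderiv_neg_of_odd hk₁_odd
  have hψ_cs : HasCompactSupport ψ := φ.hasCompactSupport_normed
  have hk₂_int : ∫ y, k₂ y ∂μ = 0 := integral_fderiv_eq_zero hk₁ (hψ_cs.fderiv ℝ)
  have hu_loc : LocallyIntegrable u μ := hu.locallyIntegrable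
  refine ⟨fun x => ∫ y, u (x - y) • ψ y ∂μ, fun x => ∫ y, u (x - y) • k₁ y ∂μ,
    hasFDerivAt_integral_comp_sub_smul hu_loc (hψ.of_le (by norm_num)) hψ_cs, ?_, ?_, ?_⟩
  · have hF' := hasFDerivAt_integral_comp_sub_smul (μ := μ) hu_loc hk₁ (hψ_cs.fderiv ℝ)
    refine lipschitzWith_of_nnnorm_fderiv_le (fun x => (hF' x).differentiableAt) fun x => ?_
    rw [(hF' x).fderiv, ← NNReal.coe_le_coe, coe_nnnorm]
    calc ‖∫ y, u (x - y) • k₂ y ∂μ‖ = ‖∫ y, u (x - y) • k₂ y ∂μ - u x • ∫ y, k₂ y ∂μ‖ := by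
          rw [hk₂_int, smul_zero, sub_zero]
      _ ≤ ω / 2 * ∫ y, ‖k₂ y‖ ∂μ :=
          norm_integral_comp_sub_smul_sub_le hu (hk₁.continuous_fderiv one_ne_zero) hk₂_supp
            hk₂_even hω x
      _ ≤ _ := Real.le_coe_toNNReal _
  · intro x
    simpa [φ.integral_normed] using
      abs_integral_comp_sub_smul_le (μ := μ) hB φ.nonneg_normed φ.integrable_normed x
  · intro x
    have := norm_integral_comp_sub_smul_sub_le (μ := μ) hu φ.continuous_normed hψ_supp hψ_even hω x
    simp only [Real.norm_eq_abs, abs_of_nonneg (φ.nonneg_normed _), φ.integral_normed,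
      smul_eq_mul, mul_one] at this
    rwa [abs_sub_comm]

theorem exists_lipschitzWith_fderiv_approx_of_secondDiff_le (φ : ContDiffBump (0 : E))
    (hφ : φ.rOut ≤ 1) {f : E → ℝ} {B ω h : ℝ} (hh : 0 < h) (hf : Continuous f)
    (hB : ∀ x, |f x| ≤ B) (hω : ∀ x y, ‖y‖ ≤ h → |f (x + y) + f (x - y) - 2 * f x| ≤ ω) :
    ∃ (g : E → ℝ) (g' : E → E →L[ℝ] ℝ), (∀ x, HasFDerivAt g (g' x) x) ∧
      LipschitzWith (h⁻¹ ^ 2 * (ω / 2 * ∫ y, ‖fderiv ℝ (fderiv ℝ (φ.normed μ)) y‖ ∂μ)).toNNReal g' ∧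
      (∀ x, |g x| ≤ B) ∧ ∀ x, |f x - g x| ≤ ω / 2 := by
  have hω_unit : ∀ x y, ‖y‖ ≤ 1 →
      |f (h • (x + y)) + f (h • (x - y)) - 2 * f (h • x)| ≤ ω := fun x y hy => by
    rw [smul_add, smul_sub]
    refine hω _ _ ?_
    rw [norm_smul, Real.norm_of_nonneg hh.le]
    exact mul_le_of_le_one_right hh.le hy
  obtain ⟨F, F', hF, hF', hFB, hFf⟩ :=
    exists_lipschitzWith_fderiv_approx_of_secondDiff_le_one (μ := μ) φ hφ
      (u := fun z => f (h • z)) (by fun_prop) (fun z => hB _) hω_unit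
  refine ⟨fun x => F (h⁻¹ • x), fun x => h⁻¹ • F' (h⁻¹ • x), hasFDerivAt_comp_smul hF h⁻¹,
    (hF'.comp_smul h⁻¹).weaken ?_, fun x => hFB _, fun x => ?_⟩
  · have hω0 : 0 ≤ ω := (abs_nonneg _).trans (hω 0 0 (by simpa using hh.le))
    have hK : 0 ≤ ω / 2 * ∫ y, ‖fderiv ℝ (fderiv ℝ (φ.normed μ)) y‖ ∂μ := by positivity
    rw [← NNReal.coe_le_coe, NNReal.coe_mul, NNReal.coe_mul, coe_nnnorm,
      Real.norm_of_nonneg (by positivity), Real.coe_toNNReal _ hK,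
      Real.coe_toNNReal _ (mul_nonneg (by positivity) hK)]
    exact le_of_eq (by ring)
  · simpa [smul_smul, mul_inv_cancel₀ hh.ne'] using hFf (h⁻¹ • x)

end Mollification

theorem rpow_neg_half_sq {t : ℝ} (ht : 0 < t) : (t ^ (-(1 / 2) : ℝ)) ^ 2 = t⁻¹ := by
  rw [← Real.rpow_natCast, ← Real.rpow_mul ht.le]
  norm_num [Real.rpow_neg_one]

section KFunctional

variable {d : ℕ} {f : EuclideanSpace ℝ (Fin d) → ℝ} {t : ℝ}

theorem abs_le_iSup_abs (hfB : ∃ B, ∀ x, |f x| ≤ B) (x : EuclideanSpace ℝ (Fin d)) :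
    |f x| ≤ ⨆ x, |f x| := by
  obtain ⟨B, hB⟩ := hfB
  exact le_ciSup ⟨B, forall_mem_range.2 hB⟩ x

theorem abs_secondDiff_le_sup2 (hfB : ∃ B, ∀ x, |f x| ≤ B) {y : EuclideanSpace ℝ (Fin d)}
    (hy : ‖y‖ ≤ t ^ (-(1 / 2) : ℝ)) (x : EuclideanSpace ℝ (Fin d)) :
    |f (x + y) + f (x - y) - 2 * f x| ≤ sup2 t f := by
  obtain ⟨B, hB⟩ := hfB
  have hΔ : ∀ x y : EuclideanSpace ℝ (Fin d), |f (x + y) + f (x - y) - 2 * f x| ≤ 4 * B :=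
    fun x y => by simpa using abs_secondDiff_le_of_abs_sub_le (g := 0) (by simpa using hB) x y
  exact (le_ciSup ⟨4 * B, forall_mem_range.2 fun x => hΔ x y⟩ x).trans
    (le_ciSup (f := fun y : {y : EuclideanSpace ℝ (Fin d) // ‖y‖ ≤ t ^ (-(1 / 2) : ℝ)} =>
        ⨆ x, |f (x + y) + f (x - y) - 2 * f x|)
      ⟨4 * B, forall_mem_range.2 fun y => ciSup_le fun x => hΔ x y⟩ ⟨y, hy⟩)

theorem sup2_le (ht : 0 ≤ t) {A : ℝ}
    (h : ∀ y : EuclideanSpace ℝ (Fin d), ‖y‖ ≤ t ^ (-(1 / 2) : ℝ) →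
      ∀ x, |f (x + y) + f (x - y) - 2 * f x| ≤ A) :
    sup2 t f ≤ A :=
  have : Nonempty {y : EuclideanSpace ℝ (Fin d) // ‖y‖ ≤ t ^ (-(1 / 2) : ℝ)} :=
    ⟨⟨0, by simpa using Real.rpow_nonneg ht _⟩⟩
  ciSup_le fun y => ciSup_le (h y y.2)

theorem K14_le (ht : 0 ≤ t) {g : EuclideanSpace ℝ (Fin d) → ℝ}
    {g' : EuclideanSpace ℝ (Fin d) → EuclideanSpace ℝ (Fin d) →L[ℝ] ℝ} {L M₀ M₁ M₂ : ℝ}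
    (hL : 0 ≤ L) (hg : ∀ x, HasFDerivAt g (g' x) x) (hg' : LipschitzWith L.toNNReal g')
    (h₀ : ∀ x, |g x| ≤ M₀) (h₁ : ∀ x, ‖g' x‖ ≤ M₁) (h₂ : ∀ x, |f x - g x| ≤ M₂) :
    K14 t f ≤ M₀ + M₁ + L + t * M₂ := by
  refine csInf_le ⟨0, ?_⟩ ⟨g, g', L, M₀, M₁, M₂, hL, hg, hg', h₀, h₁, h₂, rfl⟩
  rintro r ⟨_, _, L', N₀, N₁, N₂, hL', -, -, hN₀, hN₁, hN₂, rfl⟩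
  have := (abs_nonneg _).trans (hN₀ 0)
  have := (norm_nonneg _).trans (hN₁ 0)
  have := mul_nonneg ht ((abs_nonneg _).trans (hN₂ 0))
  linarith

theorem one_fifth_mul_le_K14 (hfB : ∃ B, ∀ x, |f x| ≤ B) (ht : 1 ≤ t) :
    1 / 5 * ((⨆ x, |f x|) + t * sup2 t f) ≤ K14 t f := by
  have ht0 : 0 < t := one_pos.trans_le ht
  obtain ⟨B, hB⟩ := hfB
  refine le_csInf ⟨_, 0, 0, 0, 0, 0, B, le_rfl, fun x => hasFDerivAt_const 0 x,
    by simp, by simp, by simp, by simpa using hB, rfl⟩ ?_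
  rintro r ⟨g, g', L, M₀, M₁, M₂, hL, hg, hg', h₀, h₁, h₂, rfl⟩
  have hM₀ : 0 ≤ M₀ := (abs_nonneg _).trans (h₀ 0)
  have hM₁ : 0 ≤ M₁ := (norm_nonneg _).trans (h₁ 0)
  have hM₂ : M₂ ≤ t * M₂ := le_mul_of_one_le_left ((abs_nonneg _).trans (h₂ 0)) ht
  have hsup : (⨆ x, |f x|) ≤ M₀ + M₂ := ciSup_le fun x => by
    linarith [abs_sub_abs_le_abs_sub (f x) (g x), h₀ x, h₂ x]
  have hsup2 : sup2 t f ≤ 2 * L * t⁻¹ + 4 * M₂ := sup2_le ht0.le fun y hy x => by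
    have hy2 : ‖y‖ ^ 2 ≤ t⁻¹ := rpow_neg_half_sq ht0 ▸ pow_le_pow_left₀ (norm_nonneg y) hy 2
    have hgΔ := abs_secondDiff_le_of_lipschitzWith hg hg' x y
    rw [Real.coe_toNNReal _ hL] at hgΔ
    have hLy := mul_le_mul_of_nonneg_left hy2 (by positivity : (0 : ℝ) ≤ 2 * L)
    linarith [abs_secondDiff_le_of_abs_sub_le h₂ x y]
  have htsup2 : t * sup2 t f ≤ 2 * L + 4 * (t * M₂) := by
    calc t * sup2 t f ≤ t * (2 * L * t⁻¹ + 4 * M₂) := by gcongr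
      _ = 2 * L + 4 * (t * M₂) := by field_simp
  linarith

theorem exists_K14_le_mul (d : ℕ) :
    ∃ C : ℝ, 1 ≤ C ∧ ∀ f : EuclideanSpace ℝ (Fin d) → ℝ, Continuous f →
      (∃ B : ℝ, ∀ x, |f x| ≤ B) → ∀ t : ℝ, 1 ≤ t →
        K14 t f ≤ C * ((⨆ x, |f x|) + t * sup2 t f) := by
  let φ : ContDiffBump (0 : EuclideanSpace ℝ (Fin d)) := ⟨1 / 2, 1, by norm_num, by norm_num⟩
  set C₂ := ∫ y, ‖fderiv ℝ (fderiv ℝ (φ.normed volume)) y‖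
  have hC₂ : 0 ≤ C₂ := by positivity
  refine ⟨C₂ + 4, by linarith, fun f hf hfB t ht => ?_⟩
  have ht0 : 0 < t := one_pos.trans_le ht
  set B₀ := ⨆ x, |f x|
  set S := sup2 t f
  have hfB₀ : ∀ x, |f x| ≤ B₀ := abs_le_iSup_abs hfB
  have hB₀ : 0 ≤ B₀ := (abs_nonneg _).trans (hfB₀ 0)
  have hS : 0 ≤ S := (abs_nonneg _).trans
    (abs_secondDiff_le_sup2 hfB (y := 0) (by simpa using Real.rpow_nonneg ht0.le _) 0)
  obtain ⟨g, g', hg, hg', hgB, hfg⟩ :=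
    exists_lipschitzWith_fderiv_approx_of_secondDiff_le (μ := volume) φ le_rfl
      (Real.rpow_pos_of_pos ht0 _) hf hfB₀ fun x y hy => abs_secondDiff_le_sup2 hfB hy x
  obtain ⟨L, hL_def⟩ : ∃ L, L = t * (S / 2 * C₂) := ⟨_, rfl⟩
  have hL : 0 ≤ L := hL_def ▸ by positivity
  rw [inv_pow, rpow_neg_half_sq ht0, inv_inv, ← hL_def] at hg'
  have hg'B : ∀ x, ‖g' x‖ ≤ 2 * B₀ + L := fun x => by
    simpa [Real.coe_toNNReal _ hL] using norm_fderiv_le_of_lipschitzWith hg hg' hgB x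
  calc K14 t f ≤ B₀ + (2 * B₀ + L) + L + t * (S / 2) := K14_le ht0.le hL hg hg' hgB hg'B hfg
    _ ≤ (C₂ + 4) * (B₀ + t * S) := by linarith [mul_nonneg hC₂ hB₀, mul_nonneg ht0.le hS]

end KFunctional

/-- There are universal constants `0 < c < C` such that, for every bounded continuous
`f : ℝ^d → ℝ` and every `t ≥ 1`,
`c (‖f‖_∞ + t sup_{|y|≤t^{-1/2}} ‖Δ²_y f‖_∞) ≤ K(t, f, C^{1,1}, C_b)
  ≤ C (‖f‖_∞ + t sup_{|y|≤t^{-1/2}} ‖Δ²_y f‖_∞)`. -/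
theorem stmt14 (d : ℕ) :
    ∃ c C : ℝ, 0 < c ∧ c < C ∧
      ∀ f : EuclideanSpace ℝ (Fin d) → ℝ, Continuous f → (∃ B : ℝ, ∀ x, |f x| ≤ B) →
        ∀ t : ℝ, 1 ≤ t →
          c * ((⨆ x : EuclideanSpace ℝ (Fin d), |f x|) + t * sup2 t f) ≤ K14 t f ∧
          K14 t f ≤ C * ((⨆ x : EuclideanSpace ℝ (Fin d), |f x|) + t * sup2 t f) := by
  obtain ⟨C, hC, hK⟩ := exists_K14_le_mul d
  exact ⟨1 / 5, C, by norm_num, by linarith, fun f hf hfB t ht =>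
    ⟨one_fifth_mul_le_K14 hfB ht, hK f hf hfB t ht⟩⟩
end

section
/- Let 0 < β < 1, a₁ ≥ β^{−(1−β)}, and define a_{k+1} = a_k + ((1−β)/β)·a_k^{−β/(1−β)} for k ≥ 1. Then there exists a constant C depending only on β such that for all k ≥ 1: β^{−(1−β)} k^{1−β} ≤ a_k ≤ [a₁^{1/(1−β)} + β^{−1}(k−1) + C·log k]^{1−β}. -/
/-!
Put `p = 1/(1-β)`, `c = (1-β)/β` and `b_k = a_k^p`, so that `p c = 1/β`. The recurrence becomes
`b_{k+1} = b_k (1 + c/b_k)^p`. Bernoulli's inequality gives `b_{k+1} ≥ b_k + p c`, hence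
`b_k ≥ k/β`; the second-order bound `(1+s)^p ≤ 1 + ps + (ps)^2` gives
`b_{k+1} ≤ b_k + 1/β + 1/(β k)`, and `1/k ≤ 2 (log (k+1) - log k)` turns the error terms into
`(2/β) log k`. Raising to the power `1-β` returns to `a_k`.
-/

open Real

lemma Real.one_add_rpow_le_of_mul_le_one {p s : ℝ} (hp : 0 ≤ p) (hs : 0 ≤ s) (hps : p * s ≤ 1) :
    (1 + s) ^ p ≤ 1 + p * s + (p * s) ^ 2 := by
  have hexp : |exp (p * s) - 1 - p * s| ≤ (p * s) ^ 2 :=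
    abs_exp_sub_one_sub_id_le (abs_le.2 ⟨by nlinarith, hps⟩)
  calc (1 + s) ^ p = exp (p * log (1 + s)) := by rw [rpow_def_of_pos (by linarith), mul_comm]
    _ ≤ exp (p * s) := by
      gcongr
      linarith [log_le_sub_one_of_pos (show 0 < 1 + s by linarith)]
    _ ≤ 1 + p * s + (p * s) ^ 2 := by linarith [le_abs_self (exp (p * s) - 1 - p * s)]

lemma Real.inv_le_two_mul_log_add_one_sub_log {x : ℝ} (hx : 1 ≤ x) :
    x⁻¹ ≤ 2 * (log (x + 1) - log x) := by
  have hx0 : 0 < x := by linarith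
  have hlog : 1 - ((x + 1) / x)⁻¹ ≤ log ((x + 1) / x) := one_sub_inv_le_log_of_pos (by positivity)
  rw [log_div (by positivity) hx0.ne', inv_div, one_sub_div (by positivity), add_sub_cancel_left]
    at hlog
  calc x⁻¹ ≤ 2 * (1 / (x + 1)) := by
        rw [inv_eq_one_div, mul_one_div, div_le_div_iff₀ hx0 (by linarith)]; linarith
    _ ≤ 2 * (log (x + 1) - log x) := by gcongr

section MultiplicativeStep

variable {p c y : ℝ}

lemma add_mul_le_mul_one_add_div_rpow (hp : 1 ≤ p) (hc : 0 ≤ c) (hy : 0 < y) :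
    y + p * c ≤ y * (1 + c / y) ^ p := by
  have hbern : 1 + p * (c / y) ≤ (1 + c / y) ^ p :=
    one_add_mul_self_le_rpow_one_add (by linarith [div_nonneg hc hy.le]) hp
  calc y + p * c = y * (1 + p * (c / y)) := by field_simp
    _ ≤ y * (1 + c / y) ^ p := by gcongr

lemma mul_one_add_div_rpow_le (hp : 0 ≤ p) (hc : 0 ≤ c) (hy : 0 < y) (hpc : p * c ≤ y) :
    y * (1 + c / y) ^ p ≤ y + p * c + (p * c) ^ 2 / y := by
  have hps : p * (c / y) ≤ 1 := by rw [← mul_div_assoc, div_le_one hy]; exact hpc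
  calc y * (1 + c / y) ^ p ≤ y * (1 + p * (c / y) + (p * (c / y)) ^ 2) := by
        gcongr
        exact one_add_rpow_le_of_mul_le_one hp (div_nonneg hc hy.le) hps
    _ = y + p * c + (p * c) ^ 2 / y := by field_simp

end MultiplicativeStep

section Sequence

variable {p c : ℝ} {b : ℕ → ℝ}

lemma nat_mul_le_of_rpow_recurrence (hp : 1 ≤ p) (hc : 0 < c) (hb₁ : p * c ≤ b 1)
    (hrec : ∀ k, 1 ≤ k → b (k + 1) = b k * (1 + c / b k) ^ p) :
    ∀ k, 1 ≤ k → k * (p * c) ≤ b k := by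
  intro k hk
  induction k, hk using Nat.le_induction with
  | base => simpa using hb₁
  | succ k hk ih =>
    have hb : 0 < b k := lt_of_lt_of_le (by positivity) ih
    rw [hrec k hk]
    push_cast
    linarith [add_mul_le_mul_one_add_div_rpow hp hc.le hb]

lemma le_add_log_of_rpow_recurrence (hp : 1 ≤ p) (hc : 0 < c) (hb₁ : p * c ≤ b 1)
    (hrec : ∀ k, 1 ≤ k → b (k + 1) = b k * (1 + c / b k) ^ p) :
    ∀ k, 1 ≤ k → b k ≤ b 1 + (k - 1) * (p * c) + 2 * (p * c) * log k := by
  have hlow := nat_mul_le_of_rpow_recurrence hp hc hb₁ hrec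
  intro k hk
  induction k, hk using Nat.le_induction with
  | base => simp
  | succ k hk ih =>
    have hk' : (1 : ℝ) ≤ k := by exact_mod_cast hk
    have hpc : 0 < p * c := by positivity
    have hb : 0 < b k := lt_of_lt_of_le (by positivity) (hlow k hk)
    have herr : (p * c) ^ 2 / b k ≤ 2 * (p * c) * (log (k + 1) - log k) := by
      calc (p * c) ^ 2 / b k ≤ (p * c) ^ 2 / (k * (p * c)) := by gcongr; exact hlow k hk
        _ = (p * c) * (k : ℝ)⁻¹ := by field_simp
        _ ≤ (p * c) * (2 * (log (k + 1) - log k)) := by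
          gcongr; exact inv_le_two_mul_log_add_one_sub_log hk'
        _ = _ := by ring
    have hstep := mul_one_add_div_rpow_le (by linarith) hc.le hb
      (by nlinarith [hlow k hk] : p * c ≤ b k)
    rw [hrec k hk]
    push_cast
    linarith

end Sequence

lemma pos_of_add_mul_rpow_recurrence {c r : ℝ} (hc : 0 ≤ c) {a : ℕ → ℝ} (ha₁ : 0 < a 1)
    (hrec : ∀ k : ℕ, 1 ≤ k → a (k + 1) = a k + c * a k ^ r) :
    ∀ k, 1 ≤ k → 0 < a k := by
  intro k hk
  induction k, hk using Nat.le_induction with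
  | base => exact ha₁
  | succ k hk ih => rw [hrec k hk]; positivity

lemma inv_le_rpow_one_div_one_sub {β x : ℝ} (hβ : β ∈ Set.Ioo (0 : ℝ) 1)
    (hx : β ^ (-(1 - β)) ≤ x) : β⁻¹ ≤ x ^ (1 / (1 - β)) := by
  obtain ⟨hβ0, hβ1⟩ := hβ
  calc β⁻¹ = (β ^ (-(1 - β))) ^ (1 / (1 - β)) := by
        rw [← rpow_mul hβ0.le, neg_mul, mul_one_div_cancel (by linarith), rpow_neg_one]
    _ ≤ x ^ (1 / (1 - β)) := rpow_le_rpow (by positivity) hx (by bound)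

lemma add_mul_rpow_rpow_eq {β x : ℝ} (hβ : β ∈ Set.Ioo (0 : ℝ) 1) (hx : 0 < x) :
    (x + (1 - β) / β * x ^ (-β / (1 - β))) ^ (1 / (1 - β)) =
      x ^ (1 / (1 - β)) * (1 + (1 - β) / β / x ^ (1 / (1 - β))) ^ (1 / (1 - β)) := by
  obtain ⟨hβ0, hβ1⟩ := hβ
  have hexp : -β / (1 - β) = 1 - 1 / (1 - β) := by field_simp [show 1 - β ≠ 0 by linarith]; ring
  have hfactor : x + (1 - β) / β * x ^ (-β / (1 - β)) =
      x * (1 + (1 - β) / β / x ^ (1 / (1 - β))) := by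
    rw [hexp, rpow_sub hx, rpow_one]
    ring
  rw [hfactor, mul_rpow hx.le]
  have : 0 < x ^ (1 / (1 - β)) := rpow_pos_of_pos hx _
  have : 0 < 1 - β := by linarith
  positivity

/-- Let `0 < β < 1`, `a₁ ≥ β^{−(1−β)}`, and `a_{k+1} = a_k + ((1−β)/β) a_k^{−β/(1−β)}` for
`k ≥ 1`. Then there is a constant `C = C(β)` such that for all `k ≥ 1`,
`β^{−(1−β)} k^{1−β} ≤ a_k ≤ [a₁^{1/(1−β)} + β⁻¹(k−1) + C log k]^{1−β}`. -/
theorem stmt15 (β : ℝ) (hβ : β ∈ Set.Ioo (0 : ℝ) 1) :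
    ∃ C : ℝ, 0 < C ∧ ∀ a : ℕ → ℝ,
      β ^ (-(1 - β)) ≤ a 1 →
      (∀ k : ℕ, 1 ≤ k → a (k + 1) = a k + (1 - β) / β * a k ^ (-β / (1 - β))) →
      ∀ k : ℕ, 1 ≤ k →
        β ^ (-(1 - β)) * (k : ℝ) ^ (1 - β) ≤ a k ∧
        a k ≤ (a 1 ^ (1 / (1 - β)) + β⁻¹ * ((k : ℝ) - 1) + C * Real.log k) ^ (1 - β) := by
  have ⟨hβ0, hβ1⟩ := hβ
  have hp : 1 ≤ 1 / (1 - β) := by rw [le_div_iff₀ (by linarith)]; linarith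
  have hc : 0 < (1 - β) / β := div_pos (by linarith) hβ0
  have hpc : 1 / (1 - β) * ((1 - β) / β) = β⁻¹ := by field_simp [show 1 - β ≠ 0 by linarith]
  refine ⟨2 * β⁻¹, by positivity, fun a ha₁ hrec k hk => ?_⟩
  have ha := pos_of_add_mul_rpow_recurrence hc.le (lt_of_lt_of_le (by positivity) ha₁) hrec
  set b : ℕ → ℝ := fun k => a k ^ (1 / (1 - β)) with hb
  have hbrec : ∀ k, 1 ≤ k → b (k + 1) = b k * (1 + (1 - β) / β / b k) ^ (1 / (1 - β)) :=
    fun k hk => by simp only [hb, hrec k hk, add_mul_rpow_rpow_eq hβ (ha k hk)]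
  have hb₁ : 1 / (1 - β) * ((1 - β) / β) ≤ b 1 := hpc ▸ inv_le_rpow_one_div_one_sub hβ ha₁
  have hak : a k = b k ^ (1 - β) := by
    rw [← rpow_mul (ha k hk).le, one_div_mul_cancel (by linarith), rpow_one]
  rw [hak]
  constructor
  · calc β ^ (-(1 - β)) * (k : ℝ) ^ (1 - β) = ((k : ℝ) * β⁻¹) ^ (1 - β) := by
          rw [mul_rpow (Nat.cast_nonneg k) (by positivity), rpow_neg hβ0.le, inv_rpow hβ0.le,
            mul_comm]
      _ ≤ b k ^ (1 - β) := by
          gcongr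
          have := nat_mul_le_of_rpow_recurrence hp hc hb₁ hbrec k hk
          rwa [hpc] at this
  · have := le_add_log_of_rpow_recurrence hp hc hb₁ hbrec k hk
    rw [hpc] at this
    gcongr
    · exact (rpow_pos_of_pos (ha k hk) _).le
    · linarith
end

section
/- Let X ⊆ X̃ and Y be normed spaces, (μₙ) Borel probability measures on X̃ converging weakly to μ, and Φ : X → Y a map. Assume: (i) for every ε > 0 there is C_ε with sup_n μₙ({x ∈ X : ‖x‖_X > C_ε}) ≤ ε; (ii) whenever xₙ ∈ X, ‖xₙ − x‖_{X̃} → 0 and sup_n ‖xₙ‖_X ≤ R, then x ∈ X with ‖x‖_X ≤ R and Φ(xₙ) → Φ(x) in Y. Then Φ_♯μₙ converges weakly to Φ_♯μ. -/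
/-!
Fix a closed `F ⊆ Y` and `ε > 0`, and let `C` be the tightness constant for `ε`. Hypothesis (c)
makes the set `A = ι {a | ‖a‖ ≤ C, Φ a ∈ F}` sequentially closed, hence closed, in `X̃`, so the
Portmanteau theorem gives `limsup μₙ(A) ≤ μ(A)`. The rest of `ι(Φ⁻¹ F)` lies in the set where
the `X`-norm exceeds `C`, which has `μₙ`-measure at most `ε` for every `n`.
-/

open Set Filter MeasureTheory Topology
open scoped ENNReal BoundedContinuousFunction

theorem limsup_measure_closed_le_of_forall_integral_tendsto {Ω ι : Type*} [MeasurableSpace Ω]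
    [TopologicalSpace Ω] [OpensMeasurableSpace Ω] [HasOuterApproxClosed Ω] {L : Filter ι}
    {μs : ι → Measure Ω} {μ : Measure Ω} [∀ i, IsProbabilityMeasure (μs i)]
    [IsProbabilityMeasure μ]
    (h : ∀ f : Ω →ᵇ ℝ, Tendsto (fun i ↦ ∫ x, f x ∂μs i) L (𝓝 (∫ x, f x ∂μ)))
    {F : Set Ω} (hF : IsClosed F) :
    limsup (fun i ↦ μs i F) L ≤ μ F :=
  ProbabilityMeasure.limsup_measure_closed_le_of_tendsto (μs := fun i ↦ ⟨μs i, inferInstance⟩)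
    (μ := ⟨μ, inferInstance⟩) (ProbabilityMeasure.tendsto_iff_forall_integral_tendsto.mpr h) hF

theorem limsup_measure_le_add_of_subset_union {Ω ι : Type*} [MeasurableSpace Ω] {L : Filter ι}
    {μs : ι → Measure Ω} {μ : Measure Ω} {A B S : Set Ω} {ε : ℝ≥0∞}
    (hAS : A ⊆ S) (hSAB : S ⊆ A ∪ B) (hA : limsup (fun i ↦ μs i A) L ≤ μ A)
    (hB : ∀ i, μs i B ≤ ε) :
    limsup (fun i ↦ μs i S) L ≤ μ S + ε := by
  rcases L.eq_or_neBot with rfl | hL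
  · simp
  calc limsup (fun i ↦ μs i S) L
      ≤ limsup (fun i ↦ μs i A + ε) L :=
        limsup_le_limsup (.of_forall fun i ↦
          (measure_mono hSAB).trans ((measure_union_le A B).trans (add_le_add_right (hB i) _)))
    _ = limsup (fun i ↦ μs i A) L + ε :=
        limsup_add_const L _ ε (by isBoundedDefault) (by isBoundedDefault)
    _ ≤ μ S + ε := by gcongr; exact hA.trans (measure_mono hAS)

theorem isClosed_image_setOf_norm_le_and_mem {X Xt Y : Type*} [Norm X] [SeminormedAddCommGroup Xt]
    [TopologicalSpace Y] (ι : X → Xt) (Φ : X → Y)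
    (hcont : ∀ (z : Xt) (xs : ℕ → X) (R : ℝ),
      Tendsto (fun n ↦ ‖ι (xs n) - z‖) atTop (𝓝 0) → (∀ n, ‖xs n‖ ≤ R) →
      ∃ a : X, ι a = z ∧ ‖a‖ ≤ R ∧ Tendsto (fun n ↦ Φ (xs n)) atTop (𝓝 (Φ a)))
    (R : ℝ) {F : Set Y} (hF : IsClosed F) :
    IsClosed (ι '' {a | ‖a‖ ≤ R ∧ Φ a ∈ F}) := by
  refine IsSeqClosed.isClosed fun zs z hzs hz ↦ ?_
  choose xs hxs hιxs using hzs
  obtain rfl : ι ∘ xs = zs := funext hιxs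
  obtain ⟨a, rfl, ha, hΦ⟩ := hcont z xs R (tendsto_iff_norm_sub_tendsto_zero.mp hz)
    fun n ↦ (hxs n).1
  exact ⟨a, ⟨ha, hF.mem_of_tendsto hΦ (.of_forall fun n ↦ (hxs n).2)⟩, rfl⟩

theorem stmt17_general {X Xt Y : Type*}
    [NormedAddCommGroup X] [NormedSpace ℝ X]
    [NormedAddCommGroup Xt] [NormedSpace ℝ Xt]
    [NormedAddCommGroup Y]
    [MeasurableSpace Xt] [OpensMeasurableSpace Xt]
    (ι : X →ₗ[ℝ] Xt)
    (Φ : X → Y)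
    (μs : ℕ → Measure Xt) (μ : Measure Xt)
    [∀ n, IsProbabilityMeasure (μs n)] [IsProbabilityMeasure μ]
    -- (a) weak convergence of `μₙ` to `μ` in the topology of `X̃`
    (hweak : ∀ f : Xt →ᵇ ℝ,
      Tendsto (fun n => ∫ z, f z ∂(μs n)) atTop (nhds (∫ z, f z ∂μ)))
    -- (b) uniform tightness of the `X`-norm under `μₙ`
    (htight : ∀ ε : ℝ, 0 < ε → ∃ Cε : ℝ,
      ∀ n, μs n {z : Xt | ∃ a : X, ι a = z ∧ Cε < ‖a‖} ≤ ENNReal.ofReal ε)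
    -- (c) sequential closedness/continuity of `Φ` on `X`-bounded sets
    (hcont : ∀ (z : Xt) (xs : ℕ → X) (R : ℝ),
      Tendsto (fun n => ‖ι (xs n) - z‖) atTop (nhds 0) → (∀ n, ‖xs n‖ ≤ R) →
      ∃ a : X, ι a = z ∧ ‖a‖ ≤ R ∧ Tendsto (fun n => Φ (xs n)) atTop (nhds (Φ a))) :
    ∀ F : Set Y, IsClosed F →
      limsup (fun n => μs n (ι '' (Φ ⁻¹' F))) atTop ≤ μ (ι '' (Φ ⁻¹' F)) := by
  intro F hF
  refine ENNReal.le_of_forall_pos_le_add fun ε hε _ ↦ ?_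
  obtain ⟨C, hC⟩ := htight ε hε
  have hA := isClosed_image_setOf_norm_le_and_mem ι Φ hcont C hF
  refine limsup_measure_le_add_of_subset_union (B := {z | ∃ a, ι a = z ∧ C < ‖a‖})
    (image_mono fun a ha ↦ ha.2) ?_
    (limsup_measure_closed_le_of_forall_integral_tendsto hweak hA) fun n ↦ ?_
  · rintro _ ⟨a, ha, rfl⟩
    rcases le_or_gt ‖a‖ C with hle | hgt
    · exact Or.inl ⟨a, ⟨hle, ha⟩, rfl⟩
    · exact Or.inr ⟨a, rfl, hgt⟩
  · simpa using hC n

/-- A generalized mapping theorem: if `μₙ → μ` weakly on `X̃`, the restrictions of `μₙ` to the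
subspace `X ⊆ X̃` are uniformly tight with respect to the `X`-norm, and `Φ : X → Y` is
continuous along `X̃`-convergent, `X`-bounded sequences (with the `X`-ball of radius `R` being
closed under such limits), then the pushforwards `Φ_♯μₙ` converge weakly to `Φ_♯μ`, in the
Portmanteau sense: `limsup μₙ(Φ⁻¹ F) ≤ μ(Φ⁻¹ F)` for every closed `F ⊆ Y`. -/
theorem stmt17 {X Xt Y : Type*}
    [NormedAddCommGroup X] [NormedSpace ℝ X]
    [NormedAddCommGroup Xt] [NormedSpace ℝ Xt]
    [NormedAddCommGroup Y] [NormedSpace ℝ Y]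
    [MeasurableSpace Xt] [OpensMeasurableSpace Xt] [BorelSpace Xt]
    (ι : X →ₗ[ℝ] Xt) (hι : Function.Injective ι)
    (Φ : X → Y)
    (μs : ℕ → Measure Xt) (μ : Measure Xt)
    [∀ n, IsProbabilityMeasure (μs n)] [IsProbabilityMeasure μ]
    -- (a) weak convergence of `μₙ` to `μ` in the topology of `X̃`
    (hweak : ∀ f : Xt →ᵇ ℝ,
      Tendsto (fun n => ∫ z, f z ∂(μs n)) atTop (nhds (∫ z, f z ∂μ)))
    -- (b) uniform tightness of the `X`-norm under `μₙ`
    (htight : ∀ ε : ℝ, 0 < ε → ∃ Cε : ℝ,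
      ∀ n, μs n {z : Xt | ∃ a : X, ι a = z ∧ Cε < ‖a‖} ≤ ENNReal.ofReal ε)
    -- (c) sequential closedness/continuity of `Φ` on `X`-bounded sets
    (hcont : ∀ (z : Xt) (xs : ℕ → X) (R : ℝ),
      Tendsto (fun n => ‖ι (xs n) - z‖) atTop (nhds 0) → (∀ n, ‖xs n‖ ≤ R) →
      ∃ a : X, ι a = z ∧ ‖a‖ ≤ R ∧ Tendsto (fun n => Φ (xs n)) atTop (nhds (Φ a))) :
    ∀ F : Set Y, IsClosed F →
      limsup (fun n => μs n (ι '' (Φ ⁻¹' F))) atTop ≤ μ (ι '' (Φ ⁻¹' F)) :=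
  stmt17_general ι Φ μs μ hweak htight hcont
end
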